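/- arXiv:2210.14265 — 5 statements merged into one kernel-verified Lean document; each statement's English description precedes it below -/
import Mathlib

section
/- There is no ℂ-linear map f : ℂ² → ℂ² ⊗ ℂ² such that f ψ = ψ ⊗ ψ for every unit vector ψ ∈ ℂ². In other words, the cloning transformation ψ ↦ ψ ⊗ ψ on quantum states of one qubit cannot be realized by any linear map. -/
/-!
A linear map is odd, while `ψ ↦ ψ ⊗ ψ` is even. Since `ψ` and `-ψ` are both unit vectors, a linear
cloner `f` would give `ψ ⊗ ψ = f ψ = -f (-ψ) = -(ψ ⊗ ψ)`, so `ψ ⊗ ψ = 0`; but `φ ⊗ φ` for a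
functional with `φ ψ ≠ 0` sends `ψ ⊗ ψ` to `(φ ψ)² ≠ 0`.
-/

open TensorProduct

variable {R M : Type*} [CommRing R] [AddCommGroup M] [Module R M]

theorem TensorProduct.tmul_self_ne_zero [NoZeroDivisors R] [Module.Projective R M] {v : M}
    (hv : v ≠ 0) : v ⊗ₜ[R] v ≠ 0 := by
  obtain ⟨φ, hφ⟩ := Module.Projective.exists_dual_ne_zero R hv
  intro h
  have h' := congrArg (lift ((LinearMap.mul R R).compl₁₂ φ φ)) h
  simp only [lift.tmul, LinearMap.compl₁₂_apply, LinearMap.mul_apply', map_zero] at h'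
  exact hφ (mul_self_eq_zero.mp h')

theorem LinearMap.tmul_self_eq_zero_of_apply_eq_tmul_self [IsAddTorsionFree (M ⊗[R] M)]
    (f : M →ₗ[R] M ⊗[R] M) {v : M} (hv : f v = v ⊗ₜ v) (hnegv : f (-v) = (-v) ⊗ₜ (-v)) :
    v ⊗ₜ[R] v = 0 := by
  rwa [neg_tmul, tmul_neg, neg_neg, map_neg, hv, eq_comm, self_eq_neg] at hnegv

/-- **No-cloning theorem** (Wootters–Zurek, Dieks, Park): there is no `ℂ`-linear map
`f : ℂ² → ℂ² ⊗ ℂ²` such that `f ψ = ψ ⊗ ψ` for every unit vector (qubit state) `ψ ∈ ℂ²`. -/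
theorem no_cloning_linear :
    ¬ ∃ f : EuclideanSpace ℂ (Fin 2) →ₗ[ℂ]
        TensorProduct ℂ (EuclideanSpace ℂ (Fin 2)) (EuclideanSpace ℂ (Fin 2)),
      ∀ ψ : EuclideanSpace ℂ (Fin 2), ‖ψ‖ = 1 → f ψ = ψ ⊗ₜ[ℂ] ψ := by
  rintro ⟨f, hf⟩
  have : IsAddTorsionFree (EuclideanSpace ℂ (Fin 2) ⊗[ℂ] EuclideanSpace ℂ (Fin 2)) :=
    .of_isTorsionFree ℂ _
  let ψ : EuclideanSpace ℂ (Fin 2) := EuclideanSpace.single 0 1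
  have hψ : ‖ψ‖ = 1 := by simp [ψ]
  have hψ_ne : ψ ≠ 0 := norm_ne_zero_iff.mp (by rw [hψ]; exact one_ne_zero)
  exact tmul_self_ne_zero hψ_ne
    (f.tmul_self_eq_zero_of_apply_eq_tmul_self (hf ψ hψ) (hf (-ψ) (by rwa [norm_neg])))
end

section
/- Let e₀, e₁ be the standard basis vectors of ℂ² and let ψ₊ = (e₀ + e₁)/√2. There is no ℂ-linear map f : ℂ² → ℂ² ⊗ ℂ² satisfying simultaneously f e₀ = e₀ ⊗ e₀, f e₁ = e₁ ⊗ e₁, and f ψ₊ = ψ₊ ⊗ ψ₊. (Indeed, linearity applied to the first two equations forces f ψ₊ = (e₀ ⊗ e₀ + e₁ ⊗ e₁)/√2 ≠ ψ₊ ⊗ ψ₊.) -/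
/-!
A linear map cloning `x` and `y` sends `a • x + b • y` to `a • x ⊗ x + b • y ⊗ y`, which has no
`x ⊗ y` component, whereas the square `(a • x + b • y) ⊗ (a • x + b • y)` has `x ⊗ y` component
`a * b`. The component is read off by the functional `φ ⊗ ψ` on `V ⊗ V`, where `φ`, `ψ` are
coordinate functionals dual to `x`, `y`.
-/

open scoped TensorProduct

/-- The standard basis vector `|0⟩` of `ℂ²`. -/
noncomputable def qubit0 : EuclideanSpace ℂ (Fin 2) := EuclideanSpace.single 0 1

/-- The standard basis vector `|1⟩` of `ℂ²`. -/
noncomputable def qubit1 : EuclideanSpace ℂ (Fin 2) := EuclideanSpace.single 1 1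

/-- The state `|+⟩ = (|0⟩ + |1⟩)/√2`. -/
noncomputable def qubitPlus : EuclideanSpace ℂ (Fin 2) :=
  ((Real.sqrt 2 : ℂ))⁻¹ • (qubit0 + qubit1)

open Module TensorProduct

theorem LinearMap.apply_smul_add_smul_ne_tmul_self {R V : Type*} [CommSemiring R]
    [AddCommMonoid V] [Module R V] {x y : V} {φ ψ : Dual R V}
    (hφx : φ x = 1) (hφy : φ y = 0) (hψx : ψ x = 0) (hψy : ψ y = 1)
    {a b : R} (hab : a * b ≠ 0) (f : V →ₗ[R] V ⊗[R] V)
    (hx : f x = x ⊗ₜ x) (hy : f y = y ⊗ₜ y) :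
    f (a • x + b • y) ≠ (a • x + b • y) ⊗ₜ (a • x + b • y) := by
  intro h
  have hcoeff := congrArg (dualDistrib R V V (φ ⊗ₜ ψ)) h
  simp only [map_add, map_smul, hx, hy, dualDistrib_apply, hφx, hφy, hψx, hψy,
    smul_eq_mul] at hcoeff
  exact hab (by simpa using hcoeff.symm)

/-- The explicit witness in the paper's proof of the no-cloning theorem: no `ℂ`-linear map
`f : ℂ² → ℂ² ⊗ ℂ²` simultaneously clones `|0⟩`, `|1⟩` and `|+⟩`. -/
theorem no_cloning_witness :
    ¬ ∃ f : EuclideanSpace ℂ (Fin 2) →ₗ[ℂ]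
        TensorProduct ℂ (EuclideanSpace ℂ (Fin 2)) (EuclideanSpace ℂ (Fin 2)),
      f qubit0 = qubit0 ⊗ₜ[ℂ] qubit0 ∧
      f qubit1 = qubit1 ⊗ₜ[ℂ] qubit1 ∧
      f qubitPlus = qubitPlus ⊗ₜ[ℂ] qubitPlus := by
  rintro ⟨f, h0, h1, hplus⟩
  set c : ℂ := (Real.sqrt 2 : ℂ)⁻¹
  have hc : c * c ≠ 0 := by simp [c]
  have hplus_eq : qubitPlus = c • qubit0 + c • qubit1 := smul_add c qubit0 qubit1
  refine f.apply_smul_add_smul_ne_tmul_self (φ := PiLp.projₗ 2 _ 0) (ψ := PiLp.projₗ 2 _ 1)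
    ?_ ?_ ?_ ?_ hc h0 h1 (hplus_eq ▸ hplus) <;>
    simp [qubit0, qubit1]
end

section
/- Let H be a finite-dimensional complex inner product space with dim H ≥ 2. There is no unitary (linear isometric) map U : H ⊗ H → H ⊗ H together with a unit vector e ∈ H (the 'blank' ancilla) such that U (ψ ⊗ e) = ψ ⊗ ψ for every unit vector ψ ∈ H. -/
open scoped TensorProduct InnerProductSpace

/-!
A cloning map preserving the inner product forces `⟪φ, ψ⟫ = ⟪φ, ψ⟫ ^ 2` for all unit vectors
`φ, ψ`: compare `⟪φ ⊗ e, ψ ⊗ e⟫ = ⟪φ, ψ⟫` with `⟪φ ⊗ φ, ψ ⊗ ψ⟫ = ⟪φ, ψ⟫ ^ 2`. So inner products of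
unit vectors would lie in `{0, 1}`, while in dimension at least 2 the unit vectors `u` and
`(3/5) u + (4/5) v`, with `u, v` orthonormal, have inner product `3/5`.
-/

section

variable {𝕜 H : Type*} [RCLike 𝕜] [NormedAddCommGroup H] [InnerProductSpace 𝕜 H]

theorem exists_orthonormal_pair_of_two_le_finrank (hdim : 2 ≤ Module.finrank 𝕜 H) :
    ∃ u v : H, ‖u‖ = 1 ∧ ‖v‖ = 1 ∧ ⟪u, v⟫_𝕜 = 0 := by
  have : FiniteDimensional 𝕜 H := Module.finite_of_finrank_pos (by omega)
  let b := stdOrthonormalBasis 𝕜 H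
  let i : Fin (Module.finrank 𝕜 H) := ⟨0, by omega⟩
  let j : Fin (Module.finrank 𝕜 H) := ⟨1, by omega⟩
  exact ⟨b i, b j, b.orthonormal.1 i, b.orthonormal.1 j,
    b.orthonormal.2 (show i ≠ j by simp [i, j, Fin.ext_iff])⟩

theorem exists_unit_vectors_inner_eq_three_fifths (hdim : 2 ≤ Module.finrank 𝕜 H) :
    ∃ φ ψ : H, ‖φ‖ = 1 ∧ ‖ψ‖ = 1 ∧ ⟪φ, ψ⟫_𝕜 = 3 / 5 := by
  obtain ⟨u, v, hu, hv, huv⟩ := exists_orthonormal_pair_of_two_le_finrank (𝕜 := 𝕜) hdim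
  refine ⟨u, (3 / 5 : 𝕜) • u + (4 / 5 : 𝕜) • v, hu, ?_, ?_⟩
  · have horth : ⟪(3 / 5 : 𝕜) • u, (4 / 5 : 𝕜) • v⟫_𝕜 = 0 := by
      simp [inner_smul_left, inner_smul_right, huv]
    have hsq := norm_add_sq_eq_norm_sq_add_norm_sq_of_inner_eq_zero _ _ horth
    rw [norm_smul, norm_smul, hu, hv] at hsq
    have h3 : ‖(3 / 5 : 𝕜)‖ = 3 / 5 := by norm_num [RCLike.norm_ofNat]
    have h4 : ‖(4 / 5 : 𝕜)‖ = 4 / 5 := by norm_num [RCLike.norm_ofNat]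
    rw [h3, h4] at hsq
    nlinarith [norm_nonneg ((3 / 5 : 𝕜) • u + (4 / 5 : 𝕜) • v)]
  · simp [inner_add_right, inner_smul_right, huv, hu]

theorem inner_sq_eq_inner_of_clones {B : H ⊗[𝕜] H → H ⊗[𝕜] H → 𝕜} {U : H ⊗[𝕜] H → H ⊗[𝕜] H}
    {e : H} (hB : ∀ a b c d : H, B (a ⊗ₜ b) (c ⊗ₜ d) = ⟪a, c⟫_𝕜 * ⟪b, d⟫_𝕜)
    (hU : ∀ x y, B (U x) (U y) = B x y) (he : ‖e‖ = 1)
    (hclone : ∀ ψ : H, ‖ψ‖ = 1 → U (ψ ⊗ₜ e) = ψ ⊗ₜ ψ) {φ ψ : H} (hφ : ‖φ‖ = 1) (hψ : ‖ψ‖ = 1) :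
    ⟪φ, ψ⟫_𝕜 ^ 2 = ⟪φ, ψ⟫_𝕜 := by
  have hee : ⟪e, e⟫_𝕜 = 1 := by simp [inner_self_eq_norm_sq_to_K, he]
  calc ⟪φ, ψ⟫_𝕜 ^ 2 = B (U (φ ⊗ₜ e)) (U (ψ ⊗ₜ e)) := by rw [hclone φ hφ, hclone ψ hψ, hB, sq]
    _ = ⟪φ, ψ⟫_𝕜 := by rw [hU, hB, hee, mul_one]

end

theorem no_cloning_unitary_general {H : Type*} [NormedAddCommGroup H] [InnerProductSpace ℂ H]
    (hdim : 2 ≤ Module.finrank ℂ H) :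
    ¬ ∃ (B : TensorProduct ℂ H H → TensorProduct ℂ H H → ℂ)
        (U : TensorProduct ℂ H H →ₗ[ℂ] TensorProduct ℂ H H) (e : H),
      (∀ x y z, B (x + y) z = B x z + B y z) ∧
      (∀ x y z, B x (y + z) = B x y + B x z) ∧
      (∀ (c : ℂ) x y, B (c • x) y = star c * B x y) ∧
      (∀ (c : ℂ) x y, B x (c • y) = c * B x y) ∧
      (∀ a b c d : H, B (a ⊗ₜ[ℂ] b) (c ⊗ₜ[ℂ] d) = (inner ℂ a c : ℂ) * (inner ℂ b d : ℂ)) ∧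
      (∀ x y, B (U x) (U y) = B x y) ∧
      ‖e‖ = 1 ∧
      (∀ ψ : H, ‖ψ‖ = 1 → U (ψ ⊗ₜ[ℂ] e) = ψ ⊗ₜ[ℂ] ψ) := by
  rintro ⟨B, U, e, -, -, -, -, hB, hU, he, hclone⟩
  obtain ⟨φ, ψ, hφ, hψ, hinner⟩ := exists_unit_vectors_inner_eq_three_fifths (𝕜 := ℂ) hdim
  have hidem := inner_sq_eq_inner_of_clones hB hU he hclone hφ hψ
  rw [hinner] at hidem
  norm_num at hidem

/-- **No-cloning theorem, unitary form.** Let `H` be a finite-dimensional complex inner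
product space of dimension at least 2. There is no unitary (inner-product-preserving linear)
map `U : H ⊗ H → H ⊗ H` together with a unit "blank" vector `e ∈ H` such that
`U (ψ ⊗ e) = ψ ⊗ ψ` for every unit vector `ψ ∈ H`. Here `B` is the inner product of the
Hilbert-space tensor product `H ⊗ H`: it is the unique sesquilinear form (conjugate-linear
in the first slot) satisfying `B (a ⊗ b) (c ⊗ d) = ⟨a,c⟩ * ⟨b,d⟩`. -/
theorem no_cloning_unitary {H : Type*} [NormedAddCommGroup H] [InnerProductSpace ℂ H]
    [FiniteDimensional ℂ H] (hdim : 2 ≤ Module.finrank ℂ H) :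
    ¬ ∃ (B : TensorProduct ℂ H H → TensorProduct ℂ H H → ℂ)
        (U : TensorProduct ℂ H H →ₗ[ℂ] TensorProduct ℂ H H) (e : H),
      (∀ x y z, B (x + y) z = B x z + B y z) ∧
      (∀ x y z, B x (y + z) = B x y + B x z) ∧
      (∀ (c : ℂ) x y, B (c • x) y = star c * B x y) ∧
      (∀ (c : ℂ) x y, B x (c • y) = c * B x y) ∧
      (∀ a b c d : H, B (a ⊗ₜ[ℂ] b) (c ⊗ₜ[ℂ] d) = (inner ℂ a c : ℂ) * (inner ℂ b d : ℂ)) ∧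
      (∀ x y, B (U x) (U y) = B x y) ∧
      ‖e‖ = 1 ∧
      (∀ ψ : H, ‖ψ‖ = 1 → U (ψ ⊗ₜ[ℂ] e) = ψ ⊗ₜ[ℂ] ψ) :=
  no_cloning_unitary_general hdim
end

section
/- Let H be a complex inner product space, let U : H ⊗ H → H ⊗ H be a unitary (inner-product-preserving linear) map, let e ∈ H be a unit vector, and let ψ, φ ∈ H be unit vectors with U (ψ ⊗ e) = ψ ⊗ ψ and U (φ ⊗ e) = φ ⊗ φ. Then either ⟨ψ, φ⟩ = 0 or ψ = φ. (Unitarity gives ⟨ψ, φ⟩ = ⟨ψ, φ⟩², so ⟨ψ, φ⟩ ∈ {0, 1}, and ⟨ψ, φ⟩ = 1 for unit vectors forces ψ = φ.) -/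
open scoped TensorProduct

theorem isIdempotentElem_inner_of_clones {𝕜 H : Type*} [RCLike 𝕜] [NormedAddCommGroup H]
    [InnerProductSpace 𝕜 H] (B : H ⊗[𝕜] H → H ⊗[𝕜] H → 𝕜) (U : H ⊗[𝕜] H → H ⊗[𝕜] H)
    (hBtmul : ∀ a b c d : H, B (a ⊗ₜ b) (c ⊗ₜ d) = inner 𝕜 a c * inner 𝕜 b d)
    (hU : ∀ x y, B (U x) (U y) = B x y) {e ψ φ : H} (he : ‖e‖ = 1)
    (hcloneψ : U (ψ ⊗ₜ e) = ψ ⊗ₜ ψ) (hcloneφ : U (φ ⊗ₜ e) = φ ⊗ₜ φ) :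
    IsIdempotentElem (inner 𝕜 ψ φ) :=
  calc inner 𝕜 ψ φ * inner 𝕜 ψ φ
      = B (U (ψ ⊗ₜ e)) (U (φ ⊗ₜ e)) := by rw [hcloneψ, hcloneφ, hBtmul]
    _ = B (ψ ⊗ₜ e) (φ ⊗ₜ e) := hU _ _
    _ = inner 𝕜 ψ φ := by rw [hBtmul, inner_self_eq_one_of_norm_eq_one he, mul_one]

theorem cloned_states_orthogonal_or_equal_general {H : Type*} [NormedAddCommGroup H]
    [InnerProductSpace ℂ H]
    (B : TensorProduct ℂ H H → TensorProduct ℂ H H → ℂ)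
    (U : TensorProduct ℂ H H →ₗ[ℂ] TensorProduct ℂ H H)
    (hBtmul : ∀ a b c d : H, B (a ⊗ₜ[ℂ] b) (c ⊗ₜ[ℂ] d) = (inner ℂ a c : ℂ) * (inner ℂ b d : ℂ))
    (hU : ∀ x y, B (U x) (U y) = B x y)
    (e ψ φ : H) (he : ‖e‖ = 1) (hψ : ‖ψ‖ = 1) (hφ : ‖φ‖ = 1)
    (hcloneψ : U (ψ ⊗ₜ[ℂ] e) = ψ ⊗ₜ[ℂ] ψ) (hcloneφ : U (φ ⊗ₜ[ℂ] e) = φ ⊗ₜ[ℂ] φ) :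
    (inner ℂ ψ φ : ℂ) = 0 ∨ ψ = φ :=
  (IsIdempotentElem.iff_eq_zero_or_one.mp
    (isIdempotentElem_inner_of_clones B U hBtmul hU he hcloneψ hcloneφ)).imp_right
      (inner_eq_one_iff_of_norm_eq_one hψ hφ).mp

/-- **Distinct non-orthogonal states cannot both be cloned.** Let `H` be a complex inner
product space, let `B` be the inner product of the Hilbert-space tensor product `H ⊗ H`,
i.e. the sesquilinear form (conjugate-linear in the first slot) with
`B (a ⊗ b) (c ⊗ d) = ⟨a,c⟩ * ⟨b,d⟩`, and let `U : H ⊗ H → H ⊗ H` be a unitary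
(inner-product-preserving linear) map. If `e, ψ, φ` are unit vectors with
`U (ψ ⊗ e) = ψ ⊗ ψ` and `U (φ ⊗ e) = φ ⊗ φ`, then `⟨ψ, φ⟩ = 0` or `ψ = φ`. -/
theorem cloned_states_orthogonal_or_equal {H : Type*} [NormedAddCommGroup H]
    [InnerProductSpace ℂ H]
    (B : TensorProduct ℂ H H → TensorProduct ℂ H H → ℂ)
    (U : TensorProduct ℂ H H →ₗ[ℂ] TensorProduct ℂ H H)
    (hBaddl : ∀ x y z, B (x + y) z = B x z + B y z)
    (hBaddr : ∀ x y z, B x (y + z) = B x y + B x z)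
    (hBsmull : ∀ (c : ℂ) x y, B (c • x) y = star c * B x y)
    (hBsmulr : ∀ (c : ℂ) x y, B x (c • y) = c * B x y)
    (hBtmul : ∀ a b c d : H, B (a ⊗ₜ[ℂ] b) (c ⊗ₜ[ℂ] d) = (inner ℂ a c : ℂ) * (inner ℂ b d : ℂ))
    (hU : ∀ x y, B (U x) (U y) = B x y)
    (e ψ φ : H) (he : ‖e‖ = 1) (hψ : ‖ψ‖ = 1) (hφ : ‖φ‖ = 1)
    (hcloneψ : U (ψ ⊗ₜ[ℂ] e) = ψ ⊗ₜ[ℂ] ψ) (hcloneφ : U (φ ⊗ₜ[ℂ] e) = φ ⊗ₜ[ℂ] φ) :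
    (inner ℂ ψ φ : ℂ) = 0 ∨ ψ = φ :=
  cloned_states_orthogonal_or_equal_general B U hBtmul hU e ψ φ he hψ hφ hcloneψ hcloneφ
end

section
/- Let H be a complex inner product space, let ψ ∈ H be a unit vector, let P : H → H be an orthogonal projection (a self-adjoint idempotent linear map), and suppose ‖P ψ‖² ≥ 1 − ε for some 0 ≤ ε < 1. Then the normalized post-measurement state φ = (‖Pψ‖)⁻¹ • Pψ satisfies ‖ψ − φ‖ ≤ √(2ε). (Indeed ⟨ψ, Pψ⟩ = ‖Pψ‖², so ‖ψ − φ‖² = 2 − 2‖Pψ‖ ≤ 2ε.) -/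
/-! Since `P` is a symmetric idempotent, `⟪ψ, Pψ⟫ = ⟪Pψ, Pψ⟫ = ‖Pψ‖²`. For unit vectors `ψ` and
`φ = Pψ / ‖Pψ‖` this gives `‖ψ - φ‖² = 2 - 2 re ⟪ψ, φ⟫ = 2 - 2‖Pψ‖`, and Cauchy–Schwarz gives
`‖Pψ‖ ≤ 1`, so `1 - ‖Pψ‖ ≤ 1 - ‖Pψ‖² ≤ ε`. -/

open RCLike

section

variable {𝕜 E : Type*} [RCLike 𝕜] [NormedAddCommGroup E] [InnerProductSpace 𝕜 E]

theorem LinearMap.IsSymmetricProjection.re_inner_self_apply {T : E →ₗ[𝕜] E}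
    (hT : T.IsSymmetricProjection) (x : E) : re (inner 𝕜 x (T x)) = ‖T x‖ ^ 2 := by
  conv_lhs => rw [← hT.isIdempotentElem, Module.End.mul_apply, ← hT.isSymmetric]
  exact inner_self_eq_norm_sq _

theorem norm_le_one_of_re_inner_eq_norm_sq {u v : E} (hu : ‖u‖ = 1)
    (huv : re (inner 𝕜 u v) = ‖v‖ ^ 2) : ‖v‖ ≤ 1 := by
  have h := re_inner_le_norm (𝕜 := 𝕜) u v
  rw [huv, hu, one_mul] at h
  nlinarith [norm_nonneg v]

theorem norm_sub_inv_norm_smul_sq {u v : E} (hu : ‖u‖ = 1) (hv : v ≠ 0)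
    (huv : re (inner 𝕜 u v) = ‖v‖ ^ 2) :
    ‖u - (‖v‖ : 𝕜)⁻¹ • v‖ ^ 2 = 2 * (1 - ‖v‖) := by
  have hre : re (inner 𝕜 u ((‖v‖ : 𝕜)⁻¹ • v)) = ‖v‖ := by
    rw [← ofReal_inv, inner_smul_real_right, smul_re, huv]
    field_simp [norm_ne_zero_iff.mpr hv]
  rw [norm_sub_sq (𝕜 := 𝕜), hu, norm_smul_inv_norm hv, hre]
  ring

theorem norm_sub_inv_norm_smul_le_sqrt {u v : E} (hu : ‖u‖ = 1)
    (huv : re (inner 𝕜 u v) = ‖v‖ ^ 2) {ε : ℝ} (hε : 1 - ε ≤ ‖v‖ ^ 2) :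
    ‖u - (‖v‖ : 𝕜)⁻¹ • v‖ ≤ Real.sqrt (2 * ε) := by
  apply Real.le_sqrt_of_sq_le
  rcases eq_or_ne v 0 with rfl | hv
  · simp only [norm_zero, smul_zero, sub_zero, hu] at hε ⊢
    linarith
  · have hv1 := norm_le_one_of_re_inner_eq_norm_sq hu huv
    rw [norm_sub_inv_norm_smul_sq hu hv huv]
    nlinarith [norm_nonneg v]

end

theorem almost_as_good_as_new_general {H : Type*} [NormedAddCommGroup H] [InnerProductSpace ℂ H]
    (ψ : H) (hψ : ‖ψ‖ = 1) (P : H →ₗ[ℂ] H)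
    (hidem : ∀ x, P (P x) = P x)
    (hsa : ∀ x y : H, (inner ℂ (P x) y : ℂ) = inner ℂ x (P y))
    (ε : ℝ) (hP : 1 - ε ≤ ‖P ψ‖ ^ 2) :
    ‖ψ - ‖P ψ‖⁻¹ • P ψ‖ ≤ Real.sqrt (2 * ε) := by
  have hproj : P.IsSymmetricProjection := ⟨LinearMap.ext hidem, hsa⟩
  rw [real_smul_eq_coe_smul (K := ℂ), ofReal_inv]
  exact norm_sub_inv_norm_smul_le_sqrt hψ (hproj.re_inner_self_apply ψ) hP

/-- **"Almost as good as new" lemma for pure states** (Aaronson, Lemma 4). Let `H` be a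
complex inner product space, `ψ ∈ H` a unit vector, and `P : H → H` an orthogonal projection
(a self-adjoint idempotent linear map). If the measurement outcome corresponding to `P`
occurs with probability `‖P ψ‖² ≥ 1 − ε` where `0 ≤ ε < 1`, then the normalized
post-measurement state `φ = ‖P ψ‖⁻¹ • P ψ` satisfies `‖ψ − φ‖ ≤ √(2ε)`. -/
theorem almost_as_good_as_new {H : Type*} [NormedAddCommGroup H] [InnerProductSpace ℂ H]
    (ψ : H) (hψ : ‖ψ‖ = 1) (P : H →ₗ[ℂ] H)
    (hidem : ∀ x, P (P x) = P x)
    (hsa : ∀ x y : H, (inner ℂ (P x) y : ℂ) = inner ℂ x (P y))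
    (ε : ℝ) (hε0 : 0 ≤ ε) (hε1 : ε < 1) (hP : 1 - ε ≤ ‖P ψ‖ ^ 2) :
    ‖ψ - ‖P ψ‖⁻¹ • P ψ‖ ≤ Real.sqrt (2 * ε) :=
  almost_as_good_as_new_general ψ hψ P hidem hsa ε hP
end
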